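/- Descent recurrence (Macdonald/Fomin–Stanley): for every n and every non-identity permutation w of {1,...,n}, the principal Schubert specialization satisfies Υ_w = Σ_{i ∈ Des(w)} (i/ℓ(w)) · Υ_{w·s_i}, where Des(w) = {i : w(i) > w(i+1)} is the descent set of w, and also Υ_w = Σ_{i ∈ Des(w⁻¹)} (i/ℓ(w)) · Υ_{s_i·w}. Each permutation w·s_i (resp. s_i·w) occurring in the sums has length ℓ(w) − 1, and Υ_e = 1 for the identity e. -/

import Mathlib

open Equiv Finset

namespace Schubert

variable {n : ℕ}

/-- Number of inversions of a permutation of `{0,...,n-1}`. -/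
def len (w : Perm (Fin n)) : ℕ :=
  (Finset.univ.filter (fun p : Fin n × Fin n => p.1 < p.2 ∧ w p.2 < w p.1)).card

/-- One-based application: `app w i = w(i)` for `1 ≤ i ≤ n` (junk otherwise). -/
def app (w : Perm (Fin n)) (i : ℕ) : ℕ :=
  if h : i - 1 < n then ((w ⟨i - 1, h⟩ : Fin n) : ℕ) + 1 else i

/-- The adjacent transposition `s_i` (one-based), swapping positions `i` and `i+1`. -/
def s (n : ℕ) (i : ℕ) : Perm (Fin n) :=
  if h : 1 ≤ i ∧ i < n then Equiv.swap ⟨i - 1, by omega⟩ ⟨i, h.2⟩ else 1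

/-- The transposition `t_(a,b)` (one-based), swapping positions `a` and `b`. -/
def t (n : ℕ) (a b : ℕ) : Perm (Fin n) :=
  if h : 1 ≤ a ∧ a ≤ n ∧ 1 ≤ b ∧ b ≤ n then
    Equiv.swap ⟨a - 1, by omega⟩ ⟨b - 1, by omega⟩ else 1

/-- The longest permutation `w_0 = (n, n-1, ..., 1)`. -/
def w0 (n : ℕ) : Perm (Fin n) where
  toFun i := ⟨n - 1 - i.val, by have := i.isLt; omega⟩
  invFun i := ⟨n - 1 - i.val, by have := i.isLt; omega⟩
  left_inv i := by have := i.isLt; apply Fin.ext; show n - 1 - (n - 1 - i.val) = i.val; omega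
  right_inv i := by have := i.isLt; apply Fin.ext; show n - 1 - (n - 1 - i.val) = i.val; omega

/-- Descent set (one-based): `Des(w) = {i ∈ {1,...,n-1} : w(i) > w(i+1)}`. -/
def des (w : Perm (Fin n)) : Finset ℕ :=
  (Finset.Icc 1 (n - 1)).filter (fun i => app w (i + 1) < app w i)

/-- Major index. -/
def maj (w : Perm (Fin n)) : ℕ := ∑ i ∈ des w, i

open Classical in
/-- The principal Schubert specialization
`Υ_w = 𝔖_w(1,...,1) = (1/ℓ(w)!) ∑_{(a_1,...,a_{ℓ(w)}) ∈ R(w)} a_1 ⋯ a_{ℓ(w)}`,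
where a reduced word for `w` is a word of length `ℓ(w)` in letters `1,...,n-1`
whose product of adjacent transpositions is `w`. -/
noncomputable def Upsilon (w : Perm (Fin n)) : ℚ :=
  (∑ f : Fin (len w) → Fin (n - 1),
      if (List.ofFn (fun j => s n ((f j : ℕ) + 1))).prod = w then
        ∏ j, ((f j : ℚ) + 1)
      else 0)
    / (len w).factorial

/-!
Write `Υ_w = W_{ℓ(w)}(w) / ℓ(w)!`, where `W_k(w)` sums the letter products `a_1 ⋯ a_k` over all
words of length `k` whose product is `w`. Peeling off the first letter gives
`W_{k+1}(w) = ∑_i i · W_k(s_i w)`. Multiplying by `s_i` changes the length by exactly one, and a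
word of length `k` has product of length at most `k`, so for `k = ℓ(w) - 1` only the `i` with
`ℓ(s_i w) = ℓ(w) - 1`, i.e. `i ∈ Des(w⁻¹)`, contribute: this is the left recurrence. Reversing
words shows `Υ_{w⁻¹} = Υ_w`, which turns the left recurrence for `w⁻¹` into the right one for `w`.
-/

def inversions (w : Perm (Fin n)) : Finset (Fin n × Fin n) :=
  univ.filter (fun p => p.1 < p.2 ∧ w p.2 < w p.1)

lemma len_eq_card_inversions (w : Perm (Fin n)) : len w = #(inversions w) := rfl

lemma mem_inversions {w : Perm (Fin n)} {p : Fin n × Fin n} :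
    p ∈ inversions w ↔ p.1 < p.2 ∧ w p.2 < w p.1 := by
  simp [inversions]

lemma swap_lt_swap_iff_of_adjacent {a b x y : Fin n} (hab : (a : ℕ) + 1 = b)
    (hxy : ¬(x = a ∧ y = b)) (hyx : ¬(x = b ∧ y = a)) :
    swap a b x < swap a b y ↔ x < y := by
  simp only [Fin.ext_iff] at hxy hyx
  rw [swap_apply_def, swap_apply_def]
  split_ifs <;> simp only [Fin.lt_def, Fin.ext_iff] at * <;> omega

lemma erase_inversions_mul_swap_of_adjacent (w : Perm (Fin n)) {a b : Fin n}
    (hab : (a : ℕ) + 1 = b) :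
    (inversions (w * swap a b)).erase (a, b) =
      ((inversions w).erase (a, b)).map ((swap a b).prodCongr (swap a b)).toEmbedding := by
  have hba : ¬ b < a := fun h => by rw [Fin.lt_def] at h; omega
  ext ⟨x, y⟩
  simp only [mem_map_equiv, Equiv.prodCongr_symm, symm_swap, Equiv.prodCongr_apply,
    Prod.map, mem_erase, ne_eq, Prod.mk.injEq, mem_inversions, Perm.mul_apply,
    swap_apply_eq_iff, swap_apply_left, swap_apply_right]
  by_cases hxy : x = a ∧ y = b
  · simp [hxy, hba]
  by_cases hyx : x = b ∧ y = a
  · simp [hyx, hba]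
  rw [swap_lt_swap_iff_of_adjacent hab hxy hyx]
  tauto

lemma len_mul_swap_of_adjacent (w : Perm (Fin n)) {a b : Fin n} (hab : (a : ℕ) + 1 = b) :
    len (w * swap a b) = if w b < w a then len w - 1 else len w + 1 := by
  have hmem (v : Perm (Fin n)) : (a, b) ∈ inversions v ↔ v b < v a := by
    simpa [mem_inversions] using fun _ => Fin.lt_def.2 (by omega)
  have hcard := congrArg Finset.card (erase_inversions_mul_swap_of_adjacent w hab)
  rw [card_map] at hcard
  have hne : w a ≠ w b := fun h => by
    have := congrArg Fin.val (w.injective h); omega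
  rcases hne.lt_or_gt with h | h
  · have h₁ : (a, b) ∈ inversions (w * swap a b) := (hmem _).2 (by simpa using h)
    have h₂ : (a, b) ∉ inversions w := fun hw => h.not_gt ((hmem w).1 hw)
    have := card_erase_add_one h₁
    rw [erase_eq_of_notMem h₂] at hcard
    rw [if_neg h.not_gt, len_eq_card_inversions, len_eq_card_inversions]
    omega
  · have h₁ : (a, b) ∉ inversions (w * swap a b) := fun hw =>
      h.not_gt (by simpa using (hmem _).1 hw)
    have h₂ : (a, b) ∈ inversions w := (hmem w).2 h
    have := card_erase_add_one h₂
    rw [erase_eq_of_notMem h₁] at hcard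
    rw [if_pos h, len_eq_card_inversions, len_eq_card_inversions]
    omega

lemma len_inv (w : Perm (Fin n)) : len w⁻¹ = len w := by
  refine card_nbij' (fun p => (w⁻¹ p.2, w⁻¹ p.1)) (fun p => (w p.2, w p.1)) ?_ ?_ ?_ ?_ <;>
    intro p hp <;>
    simp_all

lemma len_eq_zero_iff {w : Perm (Fin n)} : len w = 0 ↔ w = 1 := by
  rw [len_eq_card_inversions, card_eq_zero]
  constructor
  · intro h
    have hmono : StrictMono w := fun x y hxy => by
      refine lt_of_le_of_ne (not_lt.1 fun hyx => ?_) (w.injective.ne hxy.ne)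
      simpa [h] using mem_inversions (w := w) (p := (x, y)) |>.2 ⟨hxy, hyx⟩
    exact Equiv.ext (congrFun hmono.eq_id)
  · rintro rfl
    exact eq_empty_of_forall_notMem fun p hp => (mem_inversions.1 hp).elim lt_asymm

lemma s_mul_self (i : ℕ) : s n i * s n i = 1 := by
  unfold s; split <;> simp

lemma s_inv (i : ℕ) : (s n i)⁻¹ = s n i :=
  inv_eq_of_mul_eq_one_right (s_mul_self i)

lemma one_le_and_lt_of_mem_des {w : Perm (Fin n)} {i : ℕ} (hi : i ∈ des w) : 1 ≤ i ∧ i < n := by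
  have := (mem_filter.1 hi).1
  rw [mem_Icc] at this
  omega

lemma mem_des_iff {w : Perm (Fin n)} {i : ℕ} (h1 : 1 ≤ i) (h2 : i < n) :
    i ∈ des w ↔ w ⟨i, h2⟩ < w ⟨i - 1, by omega⟩ := by
  have he : (⟨i + 1 - 1, by omega⟩ : Fin n) = ⟨i, h2⟩ := Fin.ext (by simp)
  rw [des, mem_filter, mem_Icc, app, app, dif_pos (by omega), dif_pos (by omega)]
  simp only [he, Fin.lt_def]
  omega

lemma len_mul_s (w : Perm (Fin n)) {i : ℕ} (h1 : 1 ≤ i) (h2 : i < n) :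
    len (w * s n i) = if i ∈ des w then len w - 1 else len w + 1 := by
  rw [s, dif_pos ⟨h1, h2⟩, len_mul_swap_of_adjacent w (by simp; omega)]
  simp only [mem_des_iff h1 h2]

lemma len_s_mul (w : Perm (Fin n)) {i : ℕ} (h1 : 1 ≤ i) (h2 : i < n) :
    len (s n i * w) = if i ∈ des w⁻¹ then len w - 1 else len w + 1 := by
  rw [← len_inv (s n i * w), mul_inv_rev, s_inv, len_mul_s _ h1 h2, len_inv]

lemma len_s_mul_le (w : Perm (Fin n)) (i : ℕ) : len (s n i * w) ≤ len w + 1 := by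
  by_cases hi : 1 ≤ i ∧ i < n
  · rw [len_s_mul w hi.1 hi.2]; split <;> omega
  · simp [s, dif_neg hi]

lemma len_prod_ofFn_s_le {k : ℕ} (f : Fin k → ℕ) :
    len (List.ofFn fun j => s n (f j)).prod ≤ k := by
  induction k with
  | zero => simp [len_eq_zero_iff]
  | succ k ih =>
    rw [List.ofFn_succ, List.prod_cons]
    exact (len_s_mul_le _ _).trans (by simpa using ih _)

open Classical in
noncomputable def wordSum (n k : ℕ) (w : Perm (Fin n)) : ℚ :=
  ∑ f : Fin k → Fin (n - 1),
    if (List.ofFn (fun j => s n ((f j : ℕ) + 1))).prod = w then ∏ j, ((f j : ℚ) + 1) else 0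

lemma Upsilon_eq_wordSum (w : Perm (Fin n)) :
    Upsilon w = wordSum n (len w) w / (len w).factorial := rfl

lemma wordSum_eq_zero_of_lt_len {k : ℕ} {w : Perm (Fin n)} (h : k < len w) :
    wordSum n k w = 0 :=
  sum_eq_zero fun f _ => if_neg fun hw => by
    have := len_prod_ofFn_s_le (n := n) fun j => (f j : ℕ) + 1
    rw [hw] at this
    omega

lemma wordSum_zero_one : wordSum n 0 1 = 1 := by
  simp [wordSum]

lemma sum_fin_pred_eq_sum_Icc {M : Type*} [AddCommMonoid M] (g : ℕ → M) :
    ∑ c : Fin (n - 1), g ((c : ℕ) + 1) = ∑ i ∈ Icc 1 (n - 1), g i := by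
  rw [Fin.sum_univ_eq_sum_range (fun c => g (c + 1)), range_eq_Ico, sum_Ico_add']
  rfl

lemma wordSum_succ (k : ℕ) (w : Perm (Fin n)) :
    wordSum n (k + 1) w = ∑ i ∈ Icc 1 (n - 1), (i : ℚ) * wordSum n k (s n i * w) := by
  rw [← sum_fin_pred_eq_sum_Icc (fun i => (i : ℚ) * wordSum n k (s n i * w)), wordSum,
    ← (Fin.consEquiv fun _ => Fin (n - 1)).sum_comp, Fintype.sum_prod_type]
  refine sum_congr rfl fun c _ => ?_
  rw [wordSum, mul_sum]
  refine sum_congr rfl fun g _ => ?_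
  simp only [Fin.consEquiv, Equiv.coe_fn_mk, List.ofFn_succ, Fin.cons_zero, Fin.cons_succ,
    List.prod_cons, Fin.prod_univ_succ, ← eq_inv_mul_iff_mul_eq, s_inv, mul_ite, mul_zero]
  push_cast
  rfl

lemma ofFn_comp_rev {α : Type*} {k : ℕ} (g : Fin k → α) :
    List.ofFn (fun j => g j.rev) = (List.ofFn g).reverse := by
  simp [List.ofFn_eq_map, ← List.map_reverse, List.finRange_reverse]

lemma prod_ofFn_s_rev {k : ℕ} (f : Fin k → ℕ) :
    (List.ofFn fun j => s n (f j.rev)).prod = (List.ofFn fun j => s n (f j)).prod⁻¹ := by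
  rw [List.prod_inv_reverse, ofFn_comp_rev (fun j => s n (f j)), List.map_ofFn]
  simp [Function.comp_def, s_inv]

lemma wordSum_inv (k : ℕ) (w : Perm (Fin n)) : wordSum n k w⁻¹ = wordSum n k w := by
  rw [wordSum, wordSum, ← (Fin.revPerm.arrowCongr (Equiv.refl (Fin (n - 1)))).sum_comp]
  refine sum_congr rfl fun f _ => ?_
  have hword := prod_ofFn_s_rev (n := n) fun j => (f j : ℕ) + 1
  have hprod : ∏ j : Fin k, ((f j.rev : ℚ) + 1) = ∏ j, ((f j : ℚ) + 1) :=
    Equiv.prod_comp Fin.revPerm fun j => (f j : ℚ) + 1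
  simp only [arrowCongr_apply, refl_apply, Fin.revPerm_symm, Function.comp_def,
    Fin.revPerm_apply] at hword ⊢
  simp only [hword, inv_inj, hprod]

lemma Upsilon_inv (w : Perm (Fin n)) : Upsilon w⁻¹ = Upsilon w := by
  rw [Upsilon_eq_wordSum, Upsilon_eq_wordSum, len_inv, wordSum_inv]

lemma Upsilon_one : Upsilon (1 : Perm (Fin n)) = 1 := by
  rw [Upsilon_eq_wordSum, len_eq_zero_iff.2 rfl, wordSum_zero_one]
  simp

lemma len_mul_s_of_mem_des {w : Perm (Fin n)} {i : ℕ} (hi : i ∈ des w) :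
    len (w * s n i) = len w - 1 := by
  obtain ⟨h1, h2⟩ := one_le_and_lt_of_mem_des hi
  rw [len_mul_s w h1 h2, if_pos hi]

lemma len_s_mul_of_mem_des_inv {w : Perm (Fin n)} {i : ℕ} (hi : i ∈ des w⁻¹) :
    len (s n i * w) = len w - 1 := by
  obtain ⟨h1, h2⟩ := one_le_and_lt_of_mem_des hi
  rw [len_s_mul w h1 h2, if_pos hi]

lemma Upsilon_eq_sum_des_inv {w : Perm (Fin n)} (hw : w ≠ 1) :
    Upsilon w = ∑ i ∈ des w⁻¹, ((i : ℚ) / (len w : ℚ)) * Upsilon (s n i * w) := by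
  obtain ⟨k, hk⟩ : ∃ k, len w = k + 1 := Nat.exists_eq_succ_of_ne_zero (mt len_eq_zero_iff.1 hw)
  have hvanish : ∀ i ∈ Icc 1 (n - 1), i ∉ des w⁻¹ → (i : ℚ) * wordSum n k (s n i * w) = 0 := by
    intro i hi hnd
    rw [mem_Icc] at hi
    have hlen : len (s n i * w) = k + 2 := by rw [len_s_mul w hi.1 (by omega), if_neg hnd, hk]
    rw [wordSum_eq_zero_of_lt_len (by omega), mul_zero]
  rw [Upsilon_eq_wordSum, hk, wordSum_succ, ← sum_subset (filter_subset _ _) hvanish, sum_div]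
  refine sum_congr rfl fun i hi => ?_
  rw [Upsilon_eq_wordSum, len_s_mul_of_mem_des_inv hi, hk, Nat.add_sub_cancel, Nat.factorial_succ]
  push_cast
  field_simp

lemma Upsilon_eq_sum_des {w : Perm (Fin n)} (hw : w ≠ 1) :
    Upsilon w = ∑ i ∈ des w, ((i : ℚ) / (len w : ℚ)) * Upsilon (w * s n i) := by
  have h := Upsilon_eq_sum_des_inv (inv_ne_one.2 hw)
  rw [Upsilon_inv, inv_inv, len_inv] at h
  rw [h]
  refine sum_congr rfl fun i _ => ?_
  rw [← Upsilon_inv (w * s n i), mul_inv_rev, s_inv]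

/-- Descent recurrence, Macdonald/Fomin–Stanley:
for every non-identity `w ∈ S_n`,
`Υ_w = ∑_{i ∈ Des(w)} (i/ℓ(w)) Υ_{w s_i} = ∑_{i ∈ Des(w⁻¹)} (i/ℓ(w)) Υ_{s_i w}`,
each `w s_i` (resp. `s_i w`) in the sums has length `ℓ(w) - 1`, and `Υ_e = 1`. -/
theorem descent_recurrence (n : ℕ) (w : Perm (Fin n)) (hw : w ≠ 1) :
    (Upsilon w = ∑ i ∈ des w, ((i : ℚ) / (len w : ℚ)) * Upsilon (w * s n i)) ∧
    (Upsilon w = ∑ i ∈ des w⁻¹, ((i : ℚ) / (len w : ℚ)) * Upsilon (s n i * w)) ∧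
    (∀ i ∈ des w, len (w * s n i) = len w - 1) ∧
    (∀ i ∈ des w⁻¹, len (s n i * w) = len w - 1) ∧
    Upsilon (1 : Perm (Fin n)) = 1 :=
  ⟨Upsilon_eq_sum_des hw, Upsilon_eq_sum_des_inv hw, fun _ => len_mul_s_of_mem_des,
    fun _ => len_s_mul_of_mem_des_inv, Upsilon_one⟩

end Schubert
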